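/- Let Ω = { x ∈ ℝ⁴ : x₄ > √(x₁²+x₂²+x₃²) }, τ(x) = √(x₄² − x₁² − x₂² − x₃²), and U(x) = x / τ(x), with ω_μ = Σ_α η_{μα}U^α and g^H_{μν} = η_{μν} + ω_μ ω_ν. Then div U = 3/τ on Ω, and the divergence of the bulk-viscosity tensor B_{μν} = (div U)·g^H_{μν} is purely vertical: for every x ∈ Ω and every vector X ∈ ℝ⁴ with η(X, U(x)) = 0 one has Σ_ν ( Σ_{α,μ} η^{αμ} ∂_α B_{μν} )(x) · X^ν = 0 (indeed Σ_{α,μ} η^{αμ} ∂_α B_{μν} = (9/τ²)·ω_ν). -/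

import Mathlib

open scoped BigOperators

noncomputable section

/-- Coefficients of the Minkowski metric `diag(1,1,1,−1)`
(the fourth coordinate, index `3`, is timelike). -/
def etaCoef : Fin 4 → ℝ := fun μ => if μ = 3 then -1 else 1

/-- The Minkowski bilinear form on `ℝ⁴`: `η(v,w) = v₁w₁ + v₂w₂ + v₃w₃ − v₄w₄`. -/
def eta (v w : Fin 4 → ℝ) : ℝ := ∑ μ, etaCoef μ * v μ * w μ

/-- The components `η_{μν} = diag(1,1,1,−1)` of the Minkowski metric. -/
def etaMat (μ ν : Fin 4) : ℝ := if μ = ν then etaCoef μ else 0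

/-- The partial derivative `∂_μ f (x)`. -/
def pd (μ : Fin 4) (f : (Fin 4 → ℝ) → ℝ) (x : Fin 4 → ℝ) : ℝ :=
  fderiv ℝ f x (Pi.single μ 1)

/-- The Minkowski gradient `grad p = (∂₁p, ∂₂p, ∂₃p, −∂₄p)`. -/
def mgrad (p : (Fin 4 → ℝ) → ℝ) (x : Fin 4 → ℝ) : Fin 4 → ℝ :=
  fun ν => etaCoef ν * pd ν p x

/-- The relativistic Euler equations for the triple `(U, ρ, p)` on `Ω`:
`(ρ+p)·Σ_μ U^μ ∂_μ U^ν + (grad p)^ν + η(grad p, U)·U^ν = 0`. -/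
def EulerEqs (Ω : Set (Fin 4 → ℝ)) (U : (Fin 4 → ℝ) → Fin 4 → ℝ)
    (ρ p : (Fin 4 → ℝ) → ℝ) : Prop :=
  ∀ x ∈ Ω, ∀ ν : Fin 4,
    (ρ x + p x) * (∑ μ, U x μ * pd μ (fun y => U y ν) x)
      + mgrad p x ν + eta (mgrad p x) (U x) * U x ν = 0

/-- Conservation of energy along flow lines:
`(ρ+p)·Σ_μ ∂_μ U^μ + Σ_μ U^μ ∂_μ ρ = 0` on `Ω`. -/
def EnergyCons (Ω : Set (Fin 4 → ℝ)) (U : (Fin 4 → ℝ) → Fin 4 → ℝ)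
    (ρ p : (Fin 4 → ℝ) → ℝ) : Prop :=
  ∀ x ∈ Ω,
    (ρ x + p x) * (∑ μ, pd μ (fun y => U y μ) x) + (∑ μ, U x μ * pd μ ρ x) = 0

/-- The interior of the forward light cone in Minkowski `ℝ⁴`. -/
def lightcone : Set (Fin 4 → ℝ) :=
  {x | Real.sqrt ((x 0) ^ 2 + (x 1) ^ 2 + (x 2) ^ 2) < x 3}

/-- `τ(x) = √(x₄² − x₁² − x₂² − x₃²)`. -/
def tau (x : Fin 4 → ℝ) : ℝ :=
  Real.sqrt ((x 3) ^ 2 - (x 0) ^ 2 - (x 1) ^ 2 - (x 2) ^ 2)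

/-- The extended Hwa–Bjorken flow vector field `U(x) = x / τ(x)`. -/
def Ubj (x : Fin 4 → ℝ) : Fin 4 → ℝ := fun μ => x μ / tau x

/-- The η-dual 1-form of `Ubj`: `ω_μ = Σ_α η_{μα} x^α / τ`. -/
def omegaBj (x : Fin 4 → ℝ) : Fin 4 → ℝ := fun μ => etaCoef μ * x μ / tau x

/-- The horizontal (spatial) part of the metric: `g^H = η + ω ⊗ ω`. -/
def gH (x : Fin 4 → ℝ) (μ ν : Fin 4) : ℝ := etaMat μ ν + omegaBj x μ * omegaBj x ν

/-- The bulk-viscosity tensor `B = (div U)·g^H` of the flow `U = x/τ`. -/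
def bulk (x : Fin 4 → ℝ) (μ ν : Fin 4) : ℝ :=
  (∑ α, pd α (fun y => Ubj y α) x) * gH x μ ν

/-!
On the timelike region `τ > 0` one has `∂_β τ = -ω_β`, and the quotient rule gives
`∂_β ω_μ = g^H_{μβ} / τ` and `∂_β U^μ = η^{μμ} g^H_{μβ} / τ`. Because `ω` is a unit covector,
`Σ_μ η^{μμ} g^H_{μμ} = 4 - 1 = 3`, which is `div U = 3/τ`, and `Σ_μ U^μ g^H_{μν} = 0`.
Hence `B = (3/τ) g^H` near `x`, and in `η^{αα} ∂_α B_{αν}` the terms containing `U^α g^H_{αν}`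
vanish, leaving `(3/τ²) · 3 · ω_ν`.
-/

section PartialDerivative

variable {f g : (Fin 4 → ℝ) → ℝ} {x : Fin 4 → ℝ} (μ : Fin 4)

theorem HasFDerivAt.pd_eq {f' : (Fin 4 → ℝ) →L[ℝ] ℝ} (h : HasFDerivAt f f' x) :
    pd μ f x = f' (Pi.single μ 1) := by
  rw [pd, h.fderiv]

theorem pd_congr_of_eventuallyEq (h : f =ᶠ[nhds x] g) : pd μ f x = pd μ g x := by
  rw [pd, pd, h.fderiv_eq]

theorem pd_const (c : ℝ) : pd μ (fun _ => c) x = 0 := by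
  simp [pd]

theorem pd_apply (ν : Fin 4) : pd μ (fun y => y ν) x = if ν = μ then 1 else 0 := by
  rw [(hasFDerivAt_apply ν x).pd_eq, ContinuousLinearMap.proj_apply, Pi.single_apply]

theorem pd_neg : pd μ (fun y => -f y) x = -pd μ f x := by
  simp [pd, fderiv_fun_neg]

theorem pd_add (hf : DifferentiableAt ℝ f x) (hg : DifferentiableAt ℝ g x) :
    pd μ (fun y => f y + g y) x = pd μ f x + pd μ g x := by
  simp [pd, fderiv_fun_add hf hg]

theorem pd_sum {ι : Type*} (s : Finset ι) {F : ι → (Fin 4 → ℝ) → ℝ}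
    (hF : ∀ i ∈ s, DifferentiableAt ℝ (F i) x) :
    pd μ (fun y => ∑ i ∈ s, F i y) x = ∑ i ∈ s, pd μ (F i) x := by
  simp [pd, fderiv_fun_sum hF]

theorem pd_mul (hf : DifferentiableAt ℝ f x) (hg : DifferentiableAt ℝ g x) :
    pd μ (fun y => f y * g y) x = pd μ f x * g x + f x * pd μ g x := by
  simp only [pd, fderiv_fun_mul hf hg, add_apply, smul_apply, smul_eq_mul]
  ring

theorem pd_const_mul (c : ℝ) (hf : DifferentiableAt ℝ f x) :
    pd μ (fun y => c * f y) x = c * pd μ f x := by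
  simp [pd, fderiv_const_mul hf]

theorem pd_inv (hf : DifferentiableAt ℝ f x) (hfx : f x ≠ 0) :
    pd μ (fun y => (f y)⁻¹) x = -pd μ f x / f x ^ 2 := by
  have h : HasFDerivAt (fun y => (f y)⁻¹) ((-(f x ^ 2)⁻¹) • fderiv ℝ f x) x :=
    (hasDerivAt_inv hfx).comp_hasFDerivAt x hf.hasFDerivAt
  rw [h.pd_eq, pd]
  simp only [smul_apply, smul_eq_mul]
  ring

theorem pd_div (hf : DifferentiableAt ℝ f x) (hg : DifferentiableAt ℝ g x) (hgx : g x ≠ 0) :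
    pd μ (fun y => f y / g y) x = (pd μ f x * g x - f x * pd μ g x) / g x ^ 2 := by
  simp only [div_eq_mul_inv (f _)]
  rw [pd_mul μ hf (hg.fun_inv hgx), pd_inv μ hg hgx]
  field_simp
  ring

theorem pd_sqrt (hf : DifferentiableAt ℝ f x) (hfx : f x ≠ 0) :
    pd μ (fun y => √(f y)) x = pd μ f x / (2 * √(f x)) := by
  simp only [pd, fderiv_sqrt hf hfx, smul_apply, smul_eq_mul]
  ring

end PartialDerivative

theorem etaCoef_mul_self (μ : Fin 4) : etaCoef μ * etaCoef μ = 1 := by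
  unfold etaCoef; split_ifs <;> norm_num

theorem tau_eq_sqrt (y : Fin 4 → ℝ) : tau y = √(-eta y y) := by
  rw [tau]
  congr 1
  simp only [eta, etaCoef, Fin.sum_univ_four, Fin.reduceEq, if_true, if_false]
  ring

theorem continuous_tau : Continuous tau := by
  unfold tau; fun_prop

theorem tau_pos_of_mem_lightcone {x : Fin 4 → ℝ} (hx : x ∈ lightcone) : 0 < tau x := by
  have hx3 : 0 < x 3 := (Real.sqrt_nonneg _).trans_lt hx
  have := (Real.sqrt_lt' hx3).mp hx
  exact Real.sqrt_pos.mpr (by linarith)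

theorem pd_eta_self (x : Fin 4 → ℝ) (β : Fin 4) :
    pd β (fun y => eta y y) x = 2 * etaCoef β * x β := by
  have hterm (μ : Fin 4) : pd β (fun y => etaCoef μ * y μ * y μ) x
      = if μ = β then 2 * etaCoef β * x β else 0 := by
    simp_rw [mul_assoc]
    rw [pd_const_mul β _ (by fun_prop), pd_mul β (by fun_prop) (by fun_prop), pd_apply]
    split_ifs with h
    · subst h; ring
    · ring
  unfold eta
  rw [pd_sum β _ (fun μ _ => by fun_prop)]
  simp [hterm]

theorem sum_omegaBj_mul (x X : Fin 4 → ℝ) : ∑ ν, omegaBj x ν * X ν = eta X (Ubj x) := by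
  simp only [eta, omegaBj, Ubj]
  congr 1 with ν
  ring

theorem etaCoef_mul_omegaBj (x : Fin 4 → ℝ) (μ : Fin 4) : etaCoef μ * omegaBj x μ = Ubj x μ := by
  simp only [omegaBj, Ubj, ← mul_div_assoc, ← mul_assoc, etaCoef_mul_self, one_mul]

theorem etaCoef_mul_gH (x : Fin 4 → ℝ) (μ ν : Fin 4) :
    etaCoef μ * gH x μ ν = (if μ = ν then 1 else 0) + Ubj x μ * omegaBj x ν := by
  rw [gH, mul_add, ← mul_assoc, etaCoef_mul_omegaBj, etaMat]
  split_ifs <;> simp [etaCoef_mul_self]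

theorem gH_comm (x : Fin 4 → ℝ) (μ ν : Fin 4) : gH x μ ν = gH x ν μ := by
  by_cases h : μ = ν
  · rw [h]
  · simp [gH, etaMat, h, Ne.symm h, mul_comm]

section Timelike

variable {x : Fin 4 → ℝ} (hx : 0 < tau x)
include hx

theorem tau_sq : tau x ^ 2 = -eta x x := by
  rw [tau_eq_sqrt] at hx ⊢
  exact Real.sq_sqrt (Real.sqrt_pos.mp hx).le

theorem sum_Ubj_mul_omegaBj : ∑ μ, Ubj x μ * omegaBj x μ = -1 := by
  calc ∑ μ, Ubj x μ * omegaBj x μ = eta x x / tau x ^ 2 := by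
        rw [eta, Finset.sum_div]
        congr 1 with μ
        simp only [Ubj, omegaBj]
        ring
    _ = -1 := by rw [div_eq_iff (by positivity), tau_sq hx]; ring

theorem sum_etaCoef_mul_gH_self : ∑ μ, etaCoef μ * gH x μ μ = 3 := by
  simp only [etaCoef_mul_gH, if_pos, Finset.sum_add_distrib, sum_Ubj_mul_omegaBj hx]
  norm_num

theorem sum_Ubj_mul_gH (ν : Fin 4) : ∑ μ, Ubj x μ * gH x μ ν = 0 := by
  simp only [gH, mul_add, Finset.sum_add_distrib, etaMat, mul_ite, mul_zero,
    Finset.sum_ite_eq', Finset.mem_univ, if_true, ← mul_assoc, ← Finset.sum_mul,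
    sum_Ubj_mul_omegaBj hx]
  simp only [Ubj, omegaBj]
  ring

theorem differentiableAt_tau : DifferentiableAt ℝ tau x := by
  have hq : -eta x x ≠ 0 := by rw [← tau_sq hx]; positivity
  rw [funext tau_eq_sqrt]
  exact (by unfold eta; fun_prop : DifferentiableAt ℝ (fun y => -eta y y) x).sqrt hq

theorem pd_tau (β : Fin 4) : pd β tau x = -omegaBj x β := by
  have hq : -eta x x ≠ 0 := by rw [← tau_sq hx]; positivity
  rw [funext tau_eq_sqrt, pd_sqrt β (by unfold eta; fun_prop) hq, pd_neg, pd_eta_self,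
    ← tau_eq_sqrt, omegaBj]
  field_simp

theorem differentiableAt_omegaBj (μ : Fin 4) : DifferentiableAt ℝ (fun y => omegaBj y μ) x := by
  have := differentiableAt_tau hx
  unfold omegaBj
  fun_prop (disch := exact hx.ne')

theorem pd_omegaBj (β μ : Fin 4) : pd β (fun y => omegaBj y μ) x = gH x μ β / tau x := by
  rw [show (fun y => omegaBj y μ) = fun y => etaCoef μ * y μ / tau y from rfl,
    pd_div β (by fun_prop : DifferentiableAt ℝ (fun y : Fin 4 → ℝ => etaCoef μ * y μ) x)
      (differentiableAt_tau hx) hx.ne', pd_const_mul β _ (by fun_prop), pd_apply, pd_tau hx,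
    gH, etaMat, omegaBj, omegaBj]
  split_ifs <;> field_simp <;> ring

theorem pd_Ubj (β μ : Fin 4) : pd β (fun y => Ubj y μ) x = etaCoef μ * gH x μ β / tau x := by
  simp only [← etaCoef_mul_omegaBj]
  rw [pd_const_mul β _ (differentiableAt_omegaBj hx μ), pd_omegaBj hx, mul_div_assoc]

theorem sum_pd_Ubj : ∑ μ, pd μ (fun y => Ubj y μ) x = 3 / tau x := by
  simp only [pd_Ubj hx, ← Finset.sum_div, sum_etaCoef_mul_gH_self hx]

theorem differentiableAt_gH (α ν : Fin 4) : DifferentiableAt ℝ (fun y => gH y α ν) x :=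
  (differentiableAt_const _).add
    ((differentiableAt_omegaBj hx α).mul (differentiableAt_omegaBj hx ν))

theorem pd_gH (α β ν : Fin 4) :
    pd β (fun y => gH y α ν) x = (gH x α β * omegaBj x ν + omegaBj x α * gH x ν β) / tau x := by
  rw [show (fun y => gH y α ν) = fun y => etaMat α ν + omegaBj y α * omegaBj y ν from rfl,
    pd_add β (differentiableAt_const _)
      ((differentiableAt_omegaBj hx α).fun_mul (differentiableAt_omegaBj hx ν)),
    pd_const, pd_mul β (differentiableAt_omegaBj hx α) (differentiableAt_omegaBj hx ν),
    pd_omegaBj hx, pd_omegaBj hx]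
  ring

theorem bulk_eventuallyEq (α ν : Fin 4) :
    (fun y => bulk y α ν) =ᶠ[nhds x] fun y => 3 / tau y * gH y α ν := by
  filter_upwards [(isOpen_lt continuous_const continuous_tau).mem_nhds hx] with y hy
  rw [bulk, sum_pd_Ubj hy]

theorem pd_bulk (α β ν : Fin 4) :
    pd β (fun y => bulk y α ν) x
      = 3 * (omegaBj x β * gH x α ν + gH x α β * omegaBj x ν + omegaBj x α * gH x ν β)
        / tau x ^ 2 := by
  have h3 : DifferentiableAt ℝ (fun y => 3 / tau y) x := by
    have := differentiableAt_tau hx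
    fun_prop (disch := exact hx.ne')
  rw [pd_congr_of_eventuallyEq β (bulk_eventuallyEq hx α ν),
    pd_mul β h3 (differentiableAt_gH hx α ν),
    pd_div β (differentiableAt_const _) (differentiableAt_tau hx) hx.ne', pd_const, pd_tau hx,
    pd_gH hx]
  field_simp
  ring

theorem sum_etaCoef_mul_pd_bulk (ν : Fin 4) :
    ∑ α, etaCoef α * pd α (fun y => bulk y α ν) x = 9 / tau x ^ 2 * omegaBj x ν := by
  have hterm (α : Fin 4) : etaCoef α * pd α (fun y => bulk y α ν) x
      = 3 / tau x ^ 2 * (2 * (Ubj x α * gH x α ν) + etaCoef α * gH x α α * omegaBj x ν) := by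
    rw [pd_bulk hx, gH_comm x ν α, ← etaCoef_mul_omegaBj]
    ring
  simp only [hterm, ← Finset.mul_sum, Finset.sum_add_distrib, ← Finset.sum_mul,
    sum_Ubj_mul_gH hx, sum_etaCoef_mul_gH_self hx]
  ring

end Timelike

/-- `div U = 3/τ`, and the divergence of the bulk-viscosity
tensor `B = (div U)·g^H` equals `(9/τ²)·ω`, hence is purely vertical. -/
theorem statement11 :
    ∀ x ∈ lightcone,
      (∑ μ, pd μ (fun y => Ubj y μ) x) = 3 / tau x ∧
      (∀ ν : Fin 4,
        (∑ α, etaCoef α * pd α (fun y => bulk y α ν) x)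
          = (9 / tau x ^ 2) * omegaBj x ν) ∧
      (∀ X : Fin 4 → ℝ, eta X (Ubj x) = 0 →
        ∑ ν, (∑ α, etaCoef α * pd α (fun y => bulk y α ν) x) * X ν = 0) := by
  intro x hx
  have hτ := tau_pos_of_mem_lightcone hx
  refine ⟨sum_pd_Ubj hτ, sum_etaCoef_mul_pd_bulk hτ, fun X hX => ?_⟩
  simp only [sum_etaCoef_mul_pd_bulk hτ, mul_assoc, ← Finset.mul_sum, sum_omegaBj_mul, hX,
    mul_zero]
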